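/- arXiv:2204.12133 — 2 statements merged into one kernel-verified Lean document; each statement's English description precedes it below -/
import Mathlib

section
/- (Satisfaction Lemma for preordered algebra.) For each POA signature morphism φ : (D,S,F) → (D',S',F'), each (D,S,F)-sentence ρ, and each preordered (D',S',F')-algebra (A',≤), it holds that (A',≤) ⊨ φρ if and only if φ↾(A',≤) ⊨ ρ. -/
/-! Many-sorted algebra basics -/

structure MSSignature (S : Type) where
  Op : (n : ℕ) → (Fin n → S) → S → Type

structure MSAlgebra {S : Type} (Sig : MSSignature S) where
  carrier : S → Type
  op : ∀ {n : ℕ} {ar : Fin n → S} {s : S}, Sig.Op n ar s → (∀ i, carrier (ar i)) → carrier s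

inductive MSTerm {S : Type} (Sig : MSSignature S) : S → Type where
  | app {n : ℕ} {ar : Fin n → S} {s : S} (σ : Sig.Op n ar s)
      (args : ∀ i, MSTerm Sig (ar i)) : MSTerm Sig s

def MSAlgebra.eval {S : Type} {Sig : MSSignature S} (A : MSAlgebra Sig) :
    ∀ {s : S}, MSTerm Sig s → A.carrier s
  | _, .app σ args => A.op σ (fun i => A.eval (args i))

structure MSHom {S : Type} {Sig : MSSignature S} (A B : MSAlgebra Sig) where
  toFun : ∀ s, A.carrier s → B.carrier s
  map_op : ∀ {n : ℕ} {ar : Fin n → S} {s : S} (σ : Sig.Op n ar s) (args : ∀ i, A.carrier (ar i)),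
    toFun s (A.op σ args) = B.op σ (fun i => toFun (ar i) (args i))

def MSHom.id {S : Type} {Sig : MSSignature S} (A : MSAlgebra Sig) : MSHom A A :=
  ⟨fun _ a => a, fun _ _ => rfl⟩

def MSHom.comp {S : Type} {Sig : MSSignature S} {A B C : MSAlgebra Sig}
    (h : MSHom A B) (g : MSHom B C) : MSHom A C where
  toFun s a := g.toFun s (h.toFun s a)
  map_op σ args := by
    show g.toFun _ (h.toFun _ (A.op σ args)) = _
    rw [h.map_op, g.map_op]

def termAlgebra {S : Type} (Sig : MSSignature S) : MSAlgebra Sig where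
  carrier := MSTerm Sig
  op σ args := .app σ args
/-! Variables, sentences, signature morphisms (MSA) -/

def MSSignature.extend {S : Type} (Sig : MSSignature S) (V : Type) (vs : V → S) :
    MSSignature S where
  Op n ar s := Sig.Op n ar s ⊕ {v : V // vs v = s ∧ n = 0}

def MSAlgebra.expand {S : Type} {Sig : MSSignature S} (A : MSAlgebra Sig)
    {V : Type} {vs : V → S} (θ : ∀ v, A.carrier (vs v)) :
    MSAlgebra (Sig.extend V vs) where
  carrier := A.carrier
  op := fun σ args =>
    match σ with
    | Sum.inl σ => A.op σ args
    | Sum.inr ⟨v, hv, _⟩ => hv ▸ θ v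

inductive MSSentence {S : Type} : MSSignature S → Type 1 where
  | eq {Sig : MSSignature S} {s : S} (t t' : MSTerm Sig s) : MSSentence Sig
  | and {Sig : MSSignature S} (a b : MSSentence Sig) : MSSentence Sig
  | or {Sig : MSSignature S} (a b : MSSentence Sig) : MSSentence Sig
  | imp {Sig : MSSignature S} (a b : MSSentence Sig) : MSSentence Sig
  | not {Sig : MSSignature S} (a : MSSentence Sig) : MSSentence Sig
  | all {Sig : MSSignature S} (V : Type) (vs : V → S)
      (ρ : MSSentence (Sig.extend V vs)) : MSSentence Sig
  | ex {Sig : MSSignature S} (V : Type) (vs : V → S)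
      (ρ : MSSentence (Sig.extend V vs)) : MSSentence Sig

def MSSatisfies {S : Type} : ∀ {Sig : MSSignature S}, MSAlgebra Sig → MSSentence Sig → Prop
  | _, A, .eq t t' => A.eval t = A.eval t'
  | _, A, .and a b => MSSatisfies A a ∧ MSSatisfies A b
  | _, A, .or a b => MSSatisfies A a ∨ MSSatisfies A b
  | _, A, .imp a b => MSSatisfies A a → MSSatisfies A b
  | _, A, .not a => ¬ MSSatisfies A a
  | _, A, .all _ _ ρ => ∀ θ, MSSatisfies (A.expand θ) ρ
  | _, A, .ex _ _ ρ => ¬ ∀ θ, ¬ MSSatisfies (A.expand θ) ρ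

structure MSSigMorphism {S S' : Type} (Sig : MSSignature S) (Sig' : MSSignature S') where
  sortMap : S → S'
  opMap : ∀ {n : ℕ} {ar : Fin n → S} {s : S},
    Sig.Op n ar s → Sig'.Op n (sortMap ∘ ar) (sortMap s)

def MSSigMorphism.reduct {S S' : Type} {Sig : MSSignature S} {Sig' : MSSignature S'}
    (φ : MSSigMorphism Sig Sig') (A' : MSAlgebra Sig') : MSAlgebra Sig where
  carrier s := A'.carrier (φ.sortMap s)
  op σ args := A'.op (φ.opMap σ) args

def MSTerm.translate {S S' : Type} {Sig : MSSignature S} {Sig' : MSSignature S'}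
    (φ : MSSigMorphism Sig Sig') : ∀ {s : S}, MSTerm Sig s → MSTerm Sig' (φ.sortMap s)
  | _, .app σ args => .app (φ.opMap σ) (fun i => (args i).translate φ)

def MSSigMorphism.extend {S S' : Type} {Sig : MSSignature S} {Sig' : MSSignature S'}
    (φ : MSSigMorphism Sig Sig') (V : Type) (vs : V → S) :
    MSSigMorphism (Sig.extend V vs) (Sig'.extend V (φ.sortMap ∘ vs)) where
  sortMap := φ.sortMap
  opMap := fun σ =>
    match σ with
    | Sum.inl σ => Sum.inl (φ.opMap σ)
    | Sum.inr ⟨v, hv, hn⟩ => Sum.inr ⟨v, by simp [hv], hn⟩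

def MSSentence.translate {S S' : Type} :
    ∀ {Sig : MSSignature S} {Sig' : MSSignature S'},
      MSSigMorphism Sig Sig' → MSSentence Sig → MSSentence Sig'
  | _, _, φ, .eq t t' => .eq (t.translate φ) (t'.translate φ)
  | _, _, φ, .and a b => .and (a.translate φ) (b.translate φ)
  | _, _, φ, .or a b => .or (a.translate φ) (b.translate φ)
  | _, _, φ, .imp a b => .imp (a.translate φ) (b.translate φ)
  | _, _, φ, .not a => .not (a.translate φ)
  | _, _, φ, .all V vs ρ => .all V (φ.sortMap ∘ vs) (ρ.translate (φ.extend V vs))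
  | _, _, φ, .ex V vs ρ => .ex V (φ.sortMap ∘ vs) (ρ.translate (φ.extend V vs))
/-! Preordered algebra (POA) -/

structure POASignature where
  Sorts : Type
  isSys : Sorts → Bool
  sig : MSSignature Sorts

structure POAlgebra (P : POASignature) extends MSAlgebra P.sig where
  le : ∀ s, P.isSys s = true → carrier s → carrier s → Prop
  le_refl : ∀ s (hs : P.isSys s = true) (a : carrier s), le s hs a a
  le_trans : ∀ s (hs : P.isSys s = true) (a b c : carrier s),
    le s hs a b → le s hs b c → le s hs a c
  monotone : ∀ {n : ℕ} {ar : Fin n → P.Sorts} {s : P.Sorts}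
      (σ : P.sig.Op n ar s) (hs : P.isSys s = true)
      (args args' : ∀ i, carrier (ar i)),
      (∀ i, if h : P.isSys (ar i) = true
            then le (ar i) h (args i) (args' i) else args i = args' i) →
      le s hs (op σ args) (op σ args')

/-- A "model" over any signature with the sorts of `P`: an algebra together with a
family of binary relations on the system-sorted carriers (no axioms required);
used to define satisfaction, including for expansions by variables. -/
structure POAModel (P : POASignature) (Sig : MSSignature P.Sorts) where
  alg : MSAlgebra Sig
  le : ∀ s, P.isSys s = true → alg.carrier s → alg.carrier s → Prop

def POAlgebra.toModel {P : POASignature} (A : POAlgebra P) : POAModel P P.sig :=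
  ⟨A.toMSAlgebra, A.le⟩

def POAModel.expand {P : POASignature} {Sig : MSSignature P.Sorts} (M : POAModel P Sig)
    {V : Type} {vs : V → P.Sorts} (θ : ∀ v, M.alg.carrier (vs v)) :
    POAModel P (Sig.extend V vs) :=
  ⟨M.alg.expand θ, M.le⟩

inductive POASentence (P : POASignature) : MSSignature P.Sorts → Type 1 where
  | eq {Sig : MSSignature P.Sorts} {s : P.Sorts} (t t' : MSTerm Sig s) : POASentence P Sig
  | tr {Sig : MSSignature P.Sorts} {s : P.Sorts} (hs : P.isSys s = true)
      (t t' : MSTerm Sig s) : POASentence P Sig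
  | and {Sig : MSSignature P.Sorts} (a b : POASentence P Sig) : POASentence P Sig
  | or {Sig : MSSignature P.Sorts} (a b : POASentence P Sig) : POASentence P Sig
  | imp {Sig : MSSignature P.Sorts} (a b : POASentence P Sig) : POASentence P Sig
  | not {Sig : MSSignature P.Sorts} (a : POASentence P Sig) : POASentence P Sig
  | all {Sig : MSSignature P.Sorts} (V : Type) (vs : V → P.Sorts)
      (ρ : POASentence P (Sig.extend V vs)) : POASentence P Sig
  | ex {Sig : MSSignature P.Sorts} (V : Type) (vs : V → P.Sorts)
      (ρ : POASentence P (Sig.extend V vs)) : POASentence P Sig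

def POASat {P : POASignature} :
    ∀ {Sig : MSSignature P.Sorts}, POAModel P Sig → POASentence P Sig → Prop
  | _, M, .eq t t' => M.alg.eval t = M.alg.eval t'
  | _, M, .tr hs t t' => M.le _ hs (M.alg.eval t) (M.alg.eval t')
  | _, M, .and a b => POASat M a ∧ POASat M b
  | _, M, .or a b => POASat M a ∨ POASat M b
  | _, M, .imp a b => POASat M a → POASat M b
  | _, M, .not a => ¬ POASat M a
  | _, M, .all _ _ ρ => ∀ θ, POASat (M.expand θ) ρ
  | _, M, .ex _ _ ρ => ¬ ∀ θ, ¬ POASat (M.expand θ) ρ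

structure POASigMorphism (P P' : POASignature) where
  toMS : MSSigMorphism P.sig P'.sig
  sys_pres : ∀ s, P'.isSys (toMS.sortMap s) = P.isSys s

def POASigMorphism.reductModel {P P' : POASignature} (φ : POASigMorphism P P')
    (M' : POAModel P' P'.sig) : POAModel P P.sig where
  alg := φ.toMS.reduct M'.alg
  le s hs := M'.le (φ.toMS.sortMap s) (by rw [φ.sys_pres]; exact hs)

def POASentence.translate {P P' : POASignature} :
    ∀ {Sig : MSSignature P.Sorts} {Sig' : MSSignature P'.Sorts}
      (f : MSSigMorphism Sig Sig'),
      (∀ s, P'.isSys (f.sortMap s) = P.isSys s) →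
      POASentence P Sig → POASentence P' Sig'
  | _, _, f, _, .eq t t' => .eq (t.translate f) (t'.translate f)
  | _, _, f, hf, .tr hs t t' => .tr (by rw [hf]; exact hs) (t.translate f) (t'.translate f)
  | _, _, f, hf, .and a b => .and (a.translate f hf) (b.translate f hf)
  | _, _, f, hf, .or a b => .or (a.translate f hf) (b.translate f hf)
  | _, _, f, hf, .imp a b => .imp (a.translate f hf) (b.translate f hf)
  | _, _, f, hf, .not a => .not (a.translate f hf)
  | _, _, f, hf, .all V vs ρ => .all V (f.sortMap ∘ vs) (ρ.translate (f.extend V vs) hf)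
  | _, _, f, hf, .ex V vs ρ => .ex V (f.sortMap ∘ vs) (ρ.translate (f.extend V vs) hf)

def POASigMorphism.sen {P P' : POASignature} (φ : POASigMorphism P P') :
    POASentence P P.sig → POASentence P' P'.sig :=
  fun ρ => ρ.translate φ.toMS φ.sys_pres

/-! Induction on the sentence, over arbitrary signatures since quantifiers extend them.
Atoms hold because evaluating a translated term in `A'` is evaluating the term in the reduct.
For quantifiers, a valuation into the reduct is literally a valuation into `A'` of the translated
variables, and reducting the expansion `A'[θ]` along the extended morphism gives the expansion of
the reduct by the same `θ`. -/

theorem MSTerm.eval_translate {S S' : Type} {Sig : MSSignature S} {Sig' : MSSignature S'}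
    (f : MSSigMorphism Sig Sig') (A' : MSAlgebra Sig') :
    ∀ {s : S} (t : MSTerm Sig s), A'.eval (t.translate f) = (f.reduct A').eval t
  | _, .app σ args => by
    change A'.op (f.opMap σ) (fun i => A'.eval ((args i).translate f)) =
      A'.op (f.opMap σ) (fun i => (f.reduct A').eval (args i))
    simp only [MSTerm.eval_translate f A']

-- Stated for an arbitrary proof `h`: the proof that `MSSigMorphism.extend` builds is not a
-- constructor application, so the match in `MSAlgebra.expand` does not reduce on it.
theorem MSAlgebra.expand_op_inr {S : Type} {Sig : MSSignature S} (A : MSAlgebra Sig)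
    {V : Type} {vs : V → S} (θ : ∀ v, A.carrier (vs v))
    {n : ℕ} {ar : Fin n → S} {s : S} (v : V) (h : vs v = s ∧ n = 0)
    (args : ∀ i, (A.expand θ).carrier (ar i)) :
    HEq ((A.expand θ).op (Sum.inr ⟨v, h⟩ : (Sig.extend V vs).Op n ar s) args) (θ v) := by
  obtain ⟨rfl, rfl⟩ := h
  rfl

theorem MSSigMorphism.reduct_expand {S S' : Type} {Sig : MSSignature S}
    {Sig' : MSSignature S'} (f : MSSigMorphism Sig Sig') (A' : MSAlgebra Sig')
    {V : Type} {vs : V → S} (θ : ∀ v, (f.reduct A').carrier (vs v)) :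
    (f.extend V vs).reduct (A'.expand θ) = (f.reduct A').expand θ := by
  change MSAlgebra.mk _ _ = MSAlgebra.mk _ _
  congr 1
  funext n ar s σ args
  rcases σ with σ | ⟨v, hv, hn⟩
  · rfl
  · exact eq_of_heq <| (A'.expand_op_inr θ v _ args).trans
      ((f.reduct A').expand_op_inr θ v ⟨hv, hn⟩ args).symm

def POAModel.reduct {P P' : POASignature} {Sig : MSSignature P.Sorts}
    {Sig' : MSSignature P'.Sorts} (f : MSSigMorphism Sig Sig')
    (hf : ∀ s, P'.isSys (f.sortMap s) = P.isSys s) (M' : POAModel P' Sig') :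
    POAModel P Sig where
  alg := f.reduct M'.alg
  le s hs := M'.le (f.sortMap s) (by rw [hf]; exact hs)

theorem POAModel.reduct_expand {P P' : POASignature} {Sig : MSSignature P.Sorts}
    {Sig' : MSSignature P'.Sorts} (f : MSSigMorphism Sig Sig')
    (hf : ∀ s, P'.isSys (f.sortMap s) = P.isSys s) (M' : POAModel P' Sig')
    {V : Type} {vs : V → P.Sorts} (θ : ∀ v, (M'.reduct f hf).alg.carrier (vs v)) :
    (M'.expand θ).reduct (f.extend V vs) hf = (M'.reduct f hf).expand θ := by
  change POAModel.mk _ _ = POAModel.mk _ _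
  congr 1
  exact MSSigMorphism.reduct_expand f M'.alg θ

theorem POASentence.sat_translate_iff {P P' : POASignature} {Sig : MSSignature P.Sorts}
    (ρ : POASentence P Sig) {Sig' : MSSignature P'.Sorts} (f : MSSigMorphism Sig Sig')
    (hf : ∀ s, P'.isSys (f.sortMap s) = P.isSys s) (M' : POAModel P' Sig') :
    POASat M' (ρ.translate f hf) ↔ POASat (M'.reduct f hf) ρ := by
  induction ρ generalizing Sig' with
  | eq t t' | tr hs t t' =>
    simp only [POASat, POASentence.translate, MSTerm.eval_translate]
    rfl
  | and a b iha ihb => exact and_congr (iha f hf M') (ihb f hf M')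
  | or a b iha ihb => exact or_congr (iha f hf M') (ihb f hf M')
  | imp a b iha ihb => exact imp_congr (iha f hf M') (ihb f hf M')
  | not a ih => exact not_congr (ih f hf M')
  | all V vs ρ ih =>
    exact forall_congr' fun θ =>
      POAModel.reduct_expand f hf M' θ ▸ ih (f.extend V vs) hf (M'.expand θ)
  | ex V vs ρ ih =>
    exact not_congr <| forall_congr' fun θ => not_congr <|
      POAModel.reduct_expand f hf M' θ ▸ ih (f.extend V vs) hf (M'.expand θ)

/-- the Satisfaction Lemma for preordered algebra. -/
theorem stmt4 {P P' : POASignature} (φ : POASigMorphism P P')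
    (ρ : POASentence P P.sig) (A' : POAlgebra P') :
    POASat A'.toModel (φ.sen ρ) ↔ POASat (φ.reductModel A'.toModel) ρ :=
  ρ.sat_translate_iff φ.toMS φ.sys_pres A'.toModel
end

section
/- (Completeness of the operational semantics.) Let q : B → B' and h : B' → N be (D∪S,F)-homomorphisms such that the composite β = q;h : B → N is an nf-homomorphism, and let Γ be a β-coherent set of (D,S,F)-transitions satisfying: (i) for each transition ∀X. H ⇒ (t → t') in Γ, H is a finite conjunction of equations of the form t_i = c_i where each c_i is a constant with B_{c_i} ∈ N; (ii) for each sort s of such an equation t_i = c_i, every element of B_s equals B_c for some constant c ∈ F_{→s} with B_c ∈ N (no junk), and B_c ≠ B_{c'} for all distinct constants c, c' ∈ F_{→s} with B_c, B_{c'} ∈ N (no confusion). Then h is a POA homomorphism (B', ⟶*_{Γ/B'}) → (N, ⟶*_{Γ/β}): b1 ⟶*_{Γ/B'} b2 implies h(b1) ⟶*_{Γ/β} h(b2). -/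
/-! Algebraic rewriting -/

/-- Sorted binary relations on the carriers of an algebra. -/
def SortedRel {S : Type} {Sig : MSSignature S} (B : MSAlgebra Sig) : Type :=
  ∀ s, B.carrier s → B.carrier s → Prop

/-- Sortwise reflexive-transitive closure. -/
def rtc {S : Type} {Sig : MSSignature S} {B : MSAlgebra Sig} (R : SortedRel B) : SortedRel B :=
  fun s => Relation.ReflTransGen (R s)

/-- A (D,S,F)-transition: a Horn sentence `∀X. H ⇒ (t → t')` where `H` is a finite
conjunction of equational atoms and of transition atoms (the latter at system sorts),
and `t, t'` are terms of the same system sort. -/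
structure TransitionRule (P : POASignature) where
  V : Type
  vs : V → P.Sorts
  eqCond : Set (Σ s : P.Sorts, MSTerm (P.sig.extend V vs) s × MSTerm (P.sig.extend V vs) s)
  trCond : Set (Σ s : P.Sorts, MSTerm (P.sig.extend V vs) s × MSTerm (P.sig.extend V vs) s)
  eqCond_finite : eqCond.Finite
  trCond_finite : trCond.Finite
  trCond_sys : ∀ e ∈ trCond, P.isSys e.1 = true
  sort : P.Sorts
  sort_sys : P.isSys sort = true
  lhs : MSTerm (P.sig.extend V vs) sort
  rhs : MSTerm (P.sig.extend V vs) sort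

/-- Number of occurrences of the extra variables in a term over an extended signature. -/
def varCount {S : Type} {Sig : MSSignature S} {V : Type} {vs : V → S} :
    ∀ {s : S}, MSTerm (Sig.extend V vs) s → ℕ
  | _, .app σ args =>
      (match σ with
        | Sum.inl _ => 0
        | Sum.inr _ => 1) + ∑ i, varCount (args i)

/-- A rewriting context: a term over the signature extended with a single
fresh variable `z` (of sort `zs`), with exactly one occurrence of `z`. -/
def IsContext {S : Type} {Sig : MSSignature S} {zs s : S}
    (c : MSTerm (Sig.extend Unit (fun _ => zs)) s) : Prop :=
  varCount c = 1

/-- The function `B_c` induced by a context. -/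
def applyCtx {S : Type} {Sig : MSSignature S} (B : MSAlgebra Sig) {zs s : S}
    (c : MSTerm (Sig.extend Unit (fun _ => zs)) s) (b : B.carrier zs) : B.carrier s :=
  (B.expand (fun _ => b)).eval c

/-- `Γ(Ω)` : one application of a rule of `Γ` inside a context, with the equational
conditions holding on the nose and the transition conditions holding in `Ω`. -/
def GammaOf {P : POASignature} (Γ : Set (TransitionRule P)) (B : MSAlgebra P.sig)
    (Ω : SortedRel B) : SortedRel B :=
  fun s b b' =>
    P.isSys s = true ∧
    ∃ r ∈ Γ, ∃ c : MSTerm (P.sig.extend Unit (fun _ => r.sort)) s,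
      IsContext c ∧
      ∃ θ : ∀ v, B.carrier (r.vs v),
        (∀ e ∈ r.eqCond, (B.expand θ).eval e.2.1 = (B.expand θ).eval e.2.2) ∧
        (∀ e ∈ r.trCond, Ω e.1 ((B.expand θ).eval e.2.1) ((B.expand θ).eval e.2.2)) ∧
        b = applyCtx B c ((B.expand θ).eval r.lhs) ∧
        b' = applyCtx B c ((B.expand θ).eval r.rhs)

/-- The relations `Γ_{B,k}`. -/
def GammaIter {P : POASignature} (Γ : Set (TransitionRule P)) (B : MSAlgebra P.sig) :
    ℕ → SortedRel B
  | 0 => fun _ => Eq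
  | k + 1 => fun s b b' =>
      rtc (GammaIter Γ B k) s b b' ∨ GammaOf Γ B (rtc (GammaIter Γ B k)) s b b'

/-- `b ⟶_{Γ/B} b'`. -/
def oneStep {P : POASignature} (Γ : Set (TransitionRule P)) (B : MSAlgebra P.sig) :
    SortedRel B :=
  fun s b b' => ∃ k, GammaOf Γ B (rtc (GammaIter Γ B k)) s b b'

/-- `b ⟶*_{Γ/B} b'`, the algebraic rewriting relation. -/
def rew {P : POASignature} (Γ : Set (TransitionRule P)) (B : MSAlgebra P.sig) :
    SortedRel B :=
  rtc (oneStep Γ B)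

/-- Satisfaction of a transition rule by an algebra equipped with a sorted relation. -/
def SatRule {P : POASignature} (B : MSAlgebra P.sig) (le : SortedRel B)
    (r : TransitionRule P) : Prop :=
  ∀ θ : ∀ v, B.carrier (r.vs v),
    (∀ e ∈ r.eqCond, (B.expand θ).eval e.2.1 = (B.expand θ).eval e.2.2) →
    (∀ e ∈ r.trCond, le e.1 ((B.expand θ).eval e.2.1) ((B.expand θ).eval e.2.2)) →
    le r.sort ((B.expand θ).eval r.lhs) ((B.expand θ).eval r.rhs)

/-- The sorted relation of a preordered algebra (trivial at data sorts). -/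
def POAlgebra.relOf {P : POASignature} (A : POAlgebra P) : SortedRel A.toMSAlgebra :=
  fun s a a' => ∀ hs : P.isSys s = true, A.le s hs a a'

/-- A homomorphism of algebras-with-sorted-relations, monotone on system sorts
(the notion of POA homomorphism). -/
structure MonHom {P : POASignature} (B : MSAlgebra P.sig) (rB : SortedRel B)
    (C : MSAlgebra P.sig) (rC : SortedRel C) extends MSHom B C where
  mono : ∀ s, P.isSys s = true → ∀ b b', rB s b b' → rC s (toFun s b) (toFun s b')

/-- A conditional equation `∀X. H ⇒ (lhs = rhs)`. -/
structure CondEq {S : Type} (Sig : MSSignature S) where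
  V : Type
  vs : V → S
  cond : Set (Σ s : S, MSTerm (Sig.extend V vs) s × MSTerm (Sig.extend V vs) s)
  cond_finite : cond.Finite
  sort : S
  lhs : MSTerm (Sig.extend V vs) sort
  rhs : MSTerm (Sig.extend V vs) sort

def SatCondEq {S : Type} {Sig : MSSignature S} (B : MSAlgebra Sig) (e : CondEq Sig) : Prop :=
  ∀ θ : ∀ v, B.carrier (e.vs v),
    (∀ c ∈ e.cond, (B.expand θ).eval c.2.1 = (B.expand θ).eval c.2.2) →
    (B.expand θ).eval e.lhs = (B.expand θ).eval e.rhs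
/-! Normal forms: nf-homomorphisms -/

/-- An nf-homomorphism `β : B → N`: the carriers of `N` are subsets of the carriers
of `B` (realized as subtypes), `N` carries its own algebra structure `nop`,
`nf` (= β) is a homomorphism `B → N` and is the identity on `N`. -/
structure NFData {P : POASignature} (B : MSAlgebra P.sig) where
  mem : ∀ s, Set (B.carrier s)
  nop : ∀ {n : ℕ} {ar : Fin n → P.Sorts} {s : P.Sorts},
    P.sig.Op n ar s → (∀ i, ↥(mem (ar i))) → ↥(mem s)
  nf : ∀ s, B.carrier s → ↥(mem s)
  nf_hom : ∀ {n : ℕ} {ar : Fin n → P.Sorts} {s : P.Sorts}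
    (σ : P.sig.Op n ar s) (args : ∀ i, B.carrier (ar i)),
    nf s (B.op σ args) = nop σ (fun i => nf (ar i) (args i))
  nf_inv : ∀ s (x : ↥(mem s)), nf s (x : B.carrier s) = x

/-- The algebra `N` of an nf-homomorphism. -/
def NFData.Nalg {P : POASignature} {B : MSAlgebra P.sig} (F : NFData B) :
    MSAlgebra P.sig where
  carrier s := ↥(F.mem s)
  op := F.nop

/-- `β` as a homomorphism `B → N`. -/
def NFData.hom {P : POASignature} {B : MSAlgebra P.sig} (F : NFData B) :
    MSHom B F.Nalg where
  toFun := F.nf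
  map_op := F.nf_hom

/-- The relation `⟶_{Γ/β}` on `N`. -/
def NFData.stepβ {P : POASignature} {B : MSAlgebra P.sig} (F : NFData B)
    (Γ : Set (TransitionRule P)) : SortedRel F.Nalg :=
  fun s n1 n2 => ∃ b2, oneStep Γ B s (Subtype.val n1) b2 ∧ F.nf s b2 = n2

/-- The relation `⟶*_{Γ/β}` on `N`. -/
def NFData.rewβ {P : POASignature} {B : MSAlgebra P.sig} (F : NFData B)
    (Γ : Set (TransitionRule P)) : SortedRel F.Nalg :=
  rtc (F.stepβ Γ)

/-- `Γ` is `β`-coherent. -/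
def Coherent {P : POASignature} {B : MSAlgebra P.sig} (F : NFData B)
    (Γ : Set (TransitionRule P)) : Prop :=
  ∀ s b1 b2, oneStep Γ B s b1 b2 → F.rewβ Γ s (F.nf s b1) (F.nf s b2)

/-- The term `c` (a constant applied to no arguments) over an extended signature. -/
def constTerm {S : Type} {Sig : MSSignature S} {V : Type} {vs : V → S}
    {ar : Fin 0 → S} {s : S} (c : Sig.Op 0 ar s) : MSTerm (Sig.extend V vs) s :=
  .app (Sum.inl c) (fun i => i.elim0)

/-- The value `B_c` of a constant `c` in `B`. -/
def constVal {S : Type} {Sig : MSSignature S} (B : MSAlgebra Sig)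
    {ar : Fin 0 → S} {s : S} (c : Sig.Op 0 ar s) : B.carrier s :=
  B.op c (fun i => i.elim0)

/-- Condition (i): each rule of `Γ` has only equational conditions, each of the
form `t_i = c_i` with `c_i` a constant whose value in `B` lies in `N`. -/
def CondConstants {P : POASignature} {B : MSAlgebra P.sig} (F : NFData B)
    (Γ : Set (TransitionRule P)) : Prop :=
  ∀ r ∈ Γ, r.trCond = ∅ ∧
    ∀ e ∈ r.eqCond, ∃ (ar : Fin 0 → P.Sorts) (c : P.sig.Op 0 ar e.1),
      e.2.2 = constTerm c ∧ constVal B c ∈ F.mem e.1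

/-- No junk at sort `s`: every element of `B_s` is the value of a constant lying in `N`. -/
def NoJunk {P : POASignature} {B : MSAlgebra P.sig} (F : NFData B) (s : P.Sorts) : Prop :=
  ∀ b : B.carrier s, ∃ (ar : Fin 0 → P.Sorts) (c : P.sig.Op 0 ar s),
    constVal B c ∈ F.mem s ∧ constVal B c = b

/-- No confusion at sort `s`: distinct constants with value in `N` have distinct values. -/
def NoConfusion {P : POASignature} {B : MSAlgebra P.sig} (F : NFData B) (s : P.Sorts) : Prop :=
  ∀ (ar ar' : Fin 0 → P.Sorts) (c : P.sig.Op 0 ar s) (c' : P.sig.Op 0 ar' s),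
    constVal B c ∈ F.mem s → constVal B c' ∈ F.mem s →
    constVal B c = constVal B c' → HEq c c'

/-- Condition (ii): no junk and no confusion at every sort of an equation occurring
in a condition of a rule of `Γ`. -/
def CondProtected {P : POASignature} {B : MSAlgebra P.sig} (F : NFData B)
    (Γ : Set (TransitionRule P)) : Prop :=
  ∀ r ∈ Γ, ∀ e ∈ r.eqCond, NoJunk F e.1 ∧ NoConfusion F e.1

/-!
A valuation `θ` into `B'` is lifted to `B` by composing it with `h` and reading the resulting
normal forms as elements of `B`. Since `β` fixes `N`, the `β`-image of any term evaluated under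
the lifted valuation is the `h`-image of its value under `θ`, also inside a context. By no junk,
`B_s ⊆ N_s` at the sorts of the equational conditions, so `β` is injective there and those
conditions lift; by (i) there are no transition conditions. Hence every step `b1 ⟶ b2` in `B'`
is the `h`-image of a step `a1 ⟶ a2` in `B`, and `β`-coherence gives `β a1 ⟶* β a2` in `N`.
-/

namespace MSHom

variable {S : Type} {Sig : MSSignature S} {A B : MSAlgebra Sig}

theorem map_eval_expand (g : MSHom A B) {V : Type} {vs : V → S} (θ : ∀ v, A.carrier (vs v))
    {s : S} (t : MSTerm (Sig.extend V vs) s) :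
    g.toFun s ((A.expand θ).eval t) = (B.expand fun v => g.toFun (vs v) (θ v)).eval t := by
  induction t with
  | app σ args ih =>
    cases σ with
    | inl σ =>
      exact (g.map_op σ _).trans (congrArg (B.op σ) (funext ih))
    | inr v =>
      obtain ⟨v, rfl, -⟩ := v
      rfl

theorem map_applyCtx (g : MSHom A B) {zs s : S} (c : MSTerm (Sig.extend Unit fun _ => zs) s)
    (a : A.carrier zs) :
    g.toFun s (applyCtx A c a) = applyCtx B c (g.toFun zs a) :=
  g.map_eval_expand _ c

end MSHom

namespace NFData

variable {P : POASignature} {B B' : MSAlgebra P.sig} (F : NFData B)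

theorem nf_injective_of_noJunk {s : P.Sorts} (hs : NoJunk F s) :
    Function.Injective (F.nf s) := by
  intro a b hab
  obtain ⟨_, _, ha, rfl⟩ := hs a
  obtain ⟨_, _, hb, rfl⟩ := hs b
  rw [F.nf_inv s ⟨_, ha⟩, F.nf_inv s ⟨_, hb⟩] at hab
  exact congrArg Subtype.val hab

theorem nf_eval_expand_val (h : MSHom B' F.Nalg) {V : Type} {vs : V → P.Sorts}
    (θ : ∀ v, B'.carrier (vs v)) {s : P.Sorts} (t : MSTerm (P.sig.extend V vs) s) :
    F.nf s ((B.expand fun v => (h.toFun (vs v) (θ v)).val).eval t)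
      = h.toFun s ((B'.expand θ).eval t) := by
  rw [h.map_eval_expand θ t]
  exact (F.hom.map_eval_expand _ t).trans
    (congrArg (fun θN => (F.Nalg.expand θN).eval t) (funext fun v => F.nf_inv _ _))

theorem exists_oneStep_lift {Γ : Set (TransitionRule P)} (h : MSHom B' F.Nalg)
    (htr : ∀ r ∈ Γ, r.trCond = ∅) (hjunk : ∀ r ∈ Γ, ∀ e ∈ r.eqCond, NoJunk F e.1)
    {s : P.Sorts} {b1 b2 : B'.carrier s} (hstep : oneStep Γ B' s b1 b2) :
    ∃ a1 a2, oneStep Γ B s a1 a2 ∧ F.nf s a1 = h.toFun s b1 ∧ F.nf s a2 = h.toFun s b2 := by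
  obtain ⟨-, hsys, r, hr, c, hc, θ, heq, -, rfl, rfl⟩ := hstep
  have hnf_ctx : ∀ t : MSTerm (P.sig.extend r.V r.vs) r.sort,
      F.nf s (applyCtx B c ((B.expand fun v => (h.toFun (r.vs v) (θ v)).val).eval t))
        = h.toFun s (applyCtx B' c ((B'.expand θ).eval t)) := by
    intro t
    exact (F.hom.map_applyCtx c _).trans
      ((congrArg (applyCtx F.Nalg c) (F.nf_eval_expand_val h θ t)).trans (h.map_applyCtx c _).symm)
  refine ⟨_, _, ⟨0, hsys, r, hr, c, hc, _, fun e he => ?_, fun e he => ?_, rfl, rfl⟩,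
    hnf_ctx r.lhs, hnf_ctx r.rhs⟩
  · refine F.nf_injective_of_noJunk (hjunk r hr e he) ?_
    rw [F.nf_eval_expand_val, F.nf_eval_expand_val, heq e he]
  · simp [htr r hr] at he

end NFData

theorem stmt13_general {P : POASignature} (Γ : Set (TransitionRule P)) (B B' : MSAlgebra P.sig)
    (F : NFData B) (h : MSHom B' F.Nalg)
    (hcoh : Coherent F Γ)
    (hconst : CondConstants F Γ) (hprot : CondProtected F Γ) :
    ∀ s, P.isSys s = true → ∀ b1 b2, rew Γ B' s b1 b2 →
      F.rewβ Γ s (h.toFun s b1) (h.toFun s b2) := by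
  intro s _ b1 b2 hrew
  refine Relation.ReflTransGen.lift' (h.toFun s) (fun b1 b2 hstep => ?_) b1 b2 hrew
  obtain ⟨a1, a2, hstepB, ha1, ha2⟩ := F.exists_oneStep_lift h (fun r hr => (hconst r hr).1)
    (fun r hr e he => (hprot r hr e he).1) hstep
  have hcohB := hcoh s a1 a2 hstepB
  rw [ha1, ha2] at hcohB
  exact hcohB

/-- completeness of the operational semantics. -/
theorem stmt13 {P : POASignature} (Γ : Set (TransitionRule P)) (B B' : MSAlgebra P.sig)
    (F : NFData B) (q : MSHom B B') (h : MSHom B' F.Nalg)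
    (hfact : ∀ s b, h.toFun s (q.toFun s b) = F.nf s b)
    (hcoh : Coherent F Γ)
    (hconst : CondConstants F Γ) (hprot : CondProtected F Γ) :
    ∀ s, P.isSys s = true → ∀ b1 b2, rew Γ B' s b1 b2 →
      F.rewβ Γ s (h.toFun s b1) (h.toFun s b2) :=
  stmt13_general Γ B B' F h hcoh hconst hprot
end
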